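/- Let ε > 0, L > 0, λ > 0, and let ψ be a standing-wave profile for parameters ε, L, λ that is strictly positive on ℝ. Then the operator L₋ associated with ψ has no positive eigenvalues: there is no μ > 0 admitting a nonzero continuous function q : ℝ → ℝ with q(x) → 0 as x → ±∞, twice differentiable on ℝ \ {−L, L}, satisfying q''(x) + 2ψ(x)²q(x) − λ²q(x) = μ·q(x) there, with one-sided derivative jumps q'(x⁺) − q'(x⁻) = −ε·q(x) at x = ±L. -/

import Mathlib

/-!
The Wronskian `W = ψ q' - ψ' q` of the ground state `ψ > 0` and a putative eigenfunction `q`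
with eigenvalue `μ > 0` satisfies `W' = μ ψ q`, and the δ-jumps of `ψ'` and `q'` cancel in `W`,
so `W` is continuous. Normalise `q (x₀) > 0` and let `(u, v)` be the component of `{q > 0}`
around `x₀` (truncated far out if it is unbounded). Then `W` increases strictly on `[u, v]`,
whereas `W(v) ≤ 0 ≤ W(u)`: at a zero of `q` this is the sign of `q'` there, and far out it
follows from the decay rates: `q' ≤ -k q` and `ψ' ≥ -k' ψ` with `k' < k`, because the potential
of `q` exceeds that of `ψ` by `μ`.
-/

open Filter Topology Set

/-- A standing-wave profile for the double delta-well Gross–Pitaevskii equation with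
parameters `ε, L, lam`: `ψ` is continuous, decays at `±∞`, has derivative `ψ'` and
satisfies `ψ'' = lam² ψ - 2 ψ³` away from `±L`, and the one-sided limits of `ψ'` at
`±L` exist and jump by `-ε ψ`. -/
def IsStandingWaveProfile (ε L lam : ℝ) (ψ ψ' : ℝ → ℝ) : Prop :=
  Continuous ψ ∧
  Tendsto ψ atTop (𝓝 0) ∧ Tendsto ψ atBot (𝓝 0) ∧
  (∀ x : ℝ, x ≠ L → x ≠ -L →
    HasDerivAt ψ (ψ' x) x ∧
    HasDerivAt ψ' (lam ^ 2 * ψ x - 2 * ψ x ^ 3) x) ∧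
  (∀ x : ℝ, x = L ∨ x = -L →
    ∃ a b : ℝ,
      Tendsto ψ' (𝓝[>] x) (𝓝 a) ∧
      Tendsto ψ' (𝓝[<] x) (𝓝 b) ∧
      a - b = -ε * ψ x)

theorem Set.Finite.eventually_notMem_nhdsNE {X : Type*} [TopologicalSpace X] [T1Space X]
    {s : Set X} (hs : s.Finite) (x : X) : ∀ᶠ y in 𝓝[≠] x, y ∉ s :=
  hs.eventually_cofinite_notMem.filter_mono (nhdsNE_le_cofinite x)

theorem lt_of_hasDerivAt_pos_off_finite {s : Set ℝ} (hs : s.Finite) {f f' : ℝ → ℝ} :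
    ∀ {a b : ℝ}, a < b → ContinuousOn f (Icc a b) →
      (∀ x ∈ Ioo a b \ s, HasDerivAt f (f' x) x ∧ 0 < f' x) → f a < f b := by
  induction s, hs using Set.Finite.induction_on with
  | empty =>
    intro a b hab hf hf'
    have hmono : StrictMonoOn f (Icc a b) := by
      refine strictMonoOn_of_hasDerivWithinAt_pos (f' := f') (convex_Icc a b) hf (fun x hx => ?_)
        fun x hx => ?_
      all_goals rw [interior_Icc] at hx
      · exact (hf' x ⟨hx, notMem_empty x⟩).1.hasDerivWithinAt
      · exact (hf' x ⟨hx, notMem_empty x⟩).2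
    exact hmono (left_mem_Icc.2 hab.le) (right_mem_Icc.2 hab.le) hab
  | @insert p s _ _ ih =>
    intro a b hab hf hf'
    have hsub : ∀ {c d}, Ioo c d ⊆ Ioo a b → ∀ x ∈ Ioo c d \ s, p ∉ Ioo c d →
        HasDerivAt f (f' x) x ∧ 0 < f' x := fun hcd x hx hp =>
      hf' x ⟨hcd hx.1, by rintro (rfl | h); exacts [hp hx.1, hx.2 h]⟩
    by_cases hp : p ∈ Ioo a b
    · calc f a < f p := ih hp.1 (hf.mono (Icc_subset_Icc_right hp.2.le))
            fun x hx => hsub (Ioo_subset_Ioo_right hp.2.le) x hx (fun h => h.2.false)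
        _ < f b := ih hp.2 (hf.mono (Icc_subset_Icc_left hp.1.le))
            fun x hx => hsub (Ioo_subset_Ioo_left hp.1.le) x hx (fun h => h.1.false)
    · exact ih hab hf fun x hx => hsub subset_rfl x hx hp

theorem exists_continuous_eqOn_compl_of_tendsto_nhdsNE {X Y : Type*} [TopologicalSpace X]
    [T1Space X] [TopologicalSpace Y] {g : X → Y} {s : Set X} (hs : s.Finite)
    (hg : ∀ x ∉ s, ContinuousAt g x) (hlim : ∀ x ∈ s, ∃ y, Tendsto g (𝓝[≠] x) (𝓝 y)) :
    ∃ G : X → Y, Continuous G ∧ EqOn G g sᶜ := by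
  classical
  choose ℓ hℓ using hlim
  set G : X → Y := fun x => if hx : x ∈ s then ℓ x hx else g x
  have hGg : EqOn G g sᶜ := fun x hx => dif_neg hx
  refine ⟨G, continuous_iff_continuousAt.2 fun x => ?_, hGg⟩
  have hev : g =ᶠ[𝓝[≠] x] G :=
    (hs.eventually_notMem_nhdsNE x).mono fun y hy => (hGg hy).symm
  refine continuousWithinAt_compl_self.1 (Tendsto.congr' hev ?_)
  by_cases hx : x ∈ s
  · simpa [G, hx] using hℓ x hx
  · rw [hGg hx]
    exact (hg x hx).continuousWithinAt

theorem nonpos_of_tendsto_deriv_nhdsLT {f f' : ℝ → ℝ} {b c : ℝ}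
    (hf : ContinuousWithinAt f (Iic b) b) (hb : f b = 0)
    (hderiv : ∀ᶠ x in 𝓝[<] b, HasDerivAt f (f' x) x ∧ 0 < f x)
    (hc : Tendsto f' (𝓝[<] b) (𝓝 c)) : c ≤ 0 := by
  by_contra! hc0
  obtain ⟨l, hl, hsub⟩ := mem_nhdsLT_iff_exists_Ioo_subset.1
    (hderiv.and (hc.eventually (eventually_gt_nhds hc0)))
  obtain ⟨m, hlm, hmb⟩ := exists_between (show l < b from hl)
  have hmono : StrictMonoOn f (Icc m b) := by
    refine strictMonoOn_of_hasDerivWithinAt_pos (f' := f') (convex_Icc m b) (fun x hx => ?_)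
      (fun x hx => ?_) fun x hx => ?_
    · rcases hx.2.eq_or_lt with rfl | hxb
      · exact hf.mono Icc_subset_Iic_self
      · exact (hsub ⟨hlm.trans_le hx.1, hxb⟩).1.1.continuousAt.continuousWithinAt
    all_goals rw [interior_Icc] at hx
    · exact (hsub ⟨hlm.trans hx.1, hx.2⟩).1.1.hasDerivWithinAt
    · exact (hsub ⟨hlm.trans hx.1, hx.2⟩).2
  have := hmono (left_mem_Icc.2 hmb.le) (right_mem_Icc.2 hmb.le) hmb
  linarith [(hsub ⟨hlm, hmb⟩).1.2]

theorem le_of_mul_le_deriv {w w' : ℝ → ℝ} {k R : ℝ} (hk : 0 ≤ k)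
    (hw : ∀ x ∈ Ici R, HasDerivAt w (w' x) x) (hle : ∀ x ∈ Ici R, k * w x ≤ w' x)
    (hR : 0 ≤ w R) {x : ℝ} (hx : R ≤ x) : w R ≤ w x := by
  have hderiv : ∀ y ∈ Ici R, HasDerivAt (fun y => Real.exp (-k * y) * w y)
      (Real.exp (-k * y) * (w' y - k * w y)) y := fun y hy => by
    refine ((((hasDerivAt_id' y).const_mul (-k)).exp).mul (hw y hy)).congr_deriv ?_
    ring
  have hmono : MonotoneOn (fun y => Real.exp (-k * y) * w y) (Ici R) := by
    refine monotoneOn_of_hasDerivWithinAt_nonneg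
      (f' := fun y => Real.exp (-k * y) * (w' y - k * w y)) (convex_Ici R) (fun y hy => (hderiv y hy).continuousAt.continuousWithinAt)
      (fun y hy => ?_) fun y hy => ?_
    all_goals rw [interior_Ici] at hy
    · exact (hderiv y (Ioi_subset_Ici_self hy)).hasDerivWithinAt
    · exact mul_nonneg (Real.exp_pos _).le (sub_nonneg.2 (hle y (Ioi_subset_Ici_self hy)))
  -- `e^{-kx} w R ≤ e^{-kR} w R ≤ e^{-kx} w x`
  have hexp : Real.exp (-k * x) ≤ Real.exp (-k * R) :=
    Real.exp_le_exp.2 (mul_le_mul_of_nonpos_left hx (neg_nonpos.2 hk))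
  refine le_of_mul_le_mul_left ?_ (Real.exp_pos (-k * x))
  exact (mul_le_mul_of_nonneg_right hexp hR).trans (hmono self_mem_Ici hx hx)

theorem tendsto_atTop_of_le_deriv {f f' : ℝ → ℝ} {c R : ℝ} (hc : 0 < c)
    (hf : ∀ x ∈ Ici R, HasDerivAt f (f' x) x) (hle : ∀ x ∈ Ici R, c ≤ f' x) :
    Tendsto f atTop atTop := by
  have hlin : ∀ x ∈ Ici R, c * (x - R) ≤ f x - f R := fun x hx =>
    (convex_Ici R).mul_sub_le_image_sub_of_le_deriv
      (fun y hy => (hf y hy).continuousAt.continuousWithinAt)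
      (fun y hy => (hf y (interior_subset hy)).differentiableAt.differentiableWithinAt)
      (fun y hy => (hf y (interior_subset hy)).deriv ▸ hle y (interior_subset hy))
      R self_mem_Ici x hx hx
  refine tendsto_atTop_mono' _ ?_ <| tendsto_atTop_add_const_right _ (f R) <|
    (tendsto_atTop_add_const_right _ (-R) tendsto_id).const_mul_atTop hc
  filter_upwards [eventually_ge_atTop R] with x hx
  simp only [id]
  linarith [hlin x hx]

theorem deriv_add_mul_nonpos_of_tendsto_zero {f f' f'' : ℝ → ℝ} {k R : ℝ} (hk : 0 ≤ k)
    (hf : ∀ x ∈ Ici R, HasDerivAt f (f' x) x) (hf' : ∀ x ∈ Ici R, HasDerivAt f' (f'' x) x)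
    (hle : ∀ x ∈ Ici R, k ^ 2 * f x ≤ f'' x) (hlim : Tendsto f atTop (𝓝 0)) :
    f' R + k * f R ≤ 0 := by
  by_contra! hc
  -- `w = f' + k f` satisfies `w' ≥ k w`, hence stays above `w R > 0`
  have hw : ∀ x ∈ Ici R, f' R + k * f R ≤ f' x + k * f x := fun x hx =>
    le_of_mul_le_deriv (w := fun x => f' x + k * f x) hk
      (fun y hy => (hf' y hy).add ((hf y hy).const_mul k)) (fun y hy => by nlinarith [hle y hy]) hc.le hx
  obtain ⟨R', hR'⟩ := eventually_atTop.1 <| (eventually_ge_atTop R).and <|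
    (hlim.const_mul k).eventually_le_const (u := (f' R + k * f R) / 2)
      (by simpa using half_pos hc)
  have hgrow : Tendsto f atTop atTop :=
    tendsto_atTop_of_le_deriv (half_pos hc) (R := R')
      (fun x hx => hf x (hR' x hx).1) fun x hx => by
        linarith [hw x (hR' x hx).1, (hR' x hx).2]
  exact not_tendsto_nhds_of_tendsto_atTop hgrow 0 hlim

theorem pos_of_forall_mem_Icc_ne_zero {q : ℝ → ℝ} {a b : ℝ} (hq : ContinuousOn q (Icc a b))
    (ha : 0 < q a) (hab : a ≤ b) (hne : ∀ z ∈ Icc a b, q z ≠ 0) : 0 < q b := by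
  by_contra! hb
  obtain ⟨z, hz, hz0⟩ := intermediate_value_Icc' hab hq ⟨hb, ha.le⟩
  exact hne z hz hz0

theorem exists_first_zero {q : ℝ → ℝ} {x₀ : ℝ} (hq : Continuous q) (hx₀ : 0 < q x₀)
    (hz : ∃ z ∈ Ici x₀, q z = 0) : ∃ v, x₀ < v ∧ q v = 0 ∧ ∀ x ∈ Ico x₀ v, 0 < q x := by
  set Z := Ici x₀ ∩ q ⁻¹' {0}
  have hbdd : BddBelow Z := ⟨x₀, fun z hz => hz.1⟩
  have hv : sInf Z ∈ Z := (isClosed_Ici.inter (isClosed_singleton.preimage hq)).csInf_mem hz hbdd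
  have hx₀v : x₀ < sInf Z := hv.1.lt_of_ne fun h => hx₀.ne' (h ▸ hv.2)
  refine ⟨sInf Z, hx₀v, hv.2, fun x hx =>
    pos_of_forall_mem_Icc_ne_zero hq.continuousOn hx₀ hx.1 fun z hz hqz => ?_⟩
  exact (csInf_le hbdd ⟨hz.1, hqz⟩).not_gt (hz.2.trans_lt hx.2)

def IsSchrodingerSolutionOff (V : ℝ → ℝ) (S : Set ℝ) (y y' : ℝ → ℝ) : Prop :=
  ∀ x ∉ S, HasDerivAt y (y' x) x ∧ HasDerivAt y' (V x * y x) x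

-- the matching condition at the wells of the potential `-ε ∑_{p ∈ S} δ(x - p)`
def HasDeltaJumps (ε : ℝ) (S : Set ℝ) (y y' : ℝ → ℝ) : Prop :=
  ∀ x ∈ S, ∃ a b : ℝ, Tendsto y' (𝓝[>] x) (𝓝 a) ∧ Tendsto y' (𝓝[<] x) (𝓝 b) ∧
    a - b = -ε * y x

def wronskian (f f' g g' : ℝ → ℝ) (x : ℝ) : ℝ := f x * g' x - f' x * g x

namespace IsSchrodingerSolutionOff

variable {V : ℝ → ℝ} {S : Set ℝ} {y y' : ℝ → ℝ}

theorem neg (h : IsSchrodingerSolutionOff V S y y') : IsSchrodingerSolutionOff V S (-y) (-y') :=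
  fun x hx => ⟨(h x hx).1.neg, (h x hx).2.neg.congr_deriv (by simp)⟩

theorem comp_neg (h : IsSchrodingerSolutionOff V S y y') :
    IsSchrodingerSolutionOff (fun x => V (-x)) (-S) (fun x => y (-x)) (fun x => -y' (-x)) :=
  fun x hx => by
    have hx' : -x ∉ S := hx
    exact ⟨((h _ hx').1.comp x (hasDerivAt_neg x)).congr_deriv (by simp),
      ((h _ hx').2.comp x (hasDerivAt_neg x)).neg.congr_deriv (by simp)⟩

theorem exists_tendsto_nhdsLT (h : IsSchrodingerSolutionOff V S y y')
    (hl : ∀ x ∈ S, ∃ b, Tendsto y' (𝓝[<] x) (𝓝 b)) (x : ℝ) :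
    ∃ b, Tendsto y' (𝓝[<] x) (𝓝 b) := by
  by_cases hx : x ∈ S
  · exact hl x hx
  · exact ⟨y' x, (h x hx).2.continuousAt.continuousWithinAt⟩

end IsSchrodingerSolutionOff

namespace HasDeltaJumps

variable {ε : ℝ} {S : Set ℝ} {y y' : ℝ → ℝ}

theorem neg (h : HasDeltaJumps ε S y y') : HasDeltaJumps ε S (-y) (-y') := fun x hx => by
  obtain ⟨a, b, ha, hb, hab⟩ := h x hx
  exact ⟨-a, -b, ha.neg, hb.neg, by simp only [Pi.neg_apply]; linarith⟩

theorem exists_tendsto_nhdsLT (h : HasDeltaJumps ε S y y') :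
    ∀ x ∈ S, ∃ b, Tendsto y' (𝓝[<] x) (𝓝 b) :=
  fun x hx => let ⟨_, b, _, hb, _⟩ := h x hx; ⟨b, hb⟩

theorem exists_tendsto_nhdsGT (h : HasDeltaJumps ε S y y') :
    ∀ x ∈ S, ∃ a, Tendsto y' (𝓝[>] x) (𝓝 a) :=
  fun x hx => let ⟨a, _, ha, _⟩ := h x hx; ⟨a, ha⟩

end HasDeltaJumps

section Wronskian

variable {V : ℝ → ℝ} {S : Set ℝ} {μ ε : ℝ} {ψ ψ' q q' : ℝ → ℝ}

theorem hasDerivAt_wronskian (hψ : IsSchrodingerSolutionOff V S ψ ψ')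
    (hq : IsSchrodingerSolutionOff (fun x => V x + μ) S q q') {x : ℝ} (hx : x ∉ S) :
    HasDerivAt (wronskian ψ ψ' q q') (μ * (ψ x * q x)) x :=
  (((hψ x hx).1.mul (hq x hx).2).sub ((hψ x hx).2.mul (hq x hx).1)).congr_deriv (by ring)

theorem wronskian_comp_neg (x : ℝ) :
    wronskian (fun x => ψ (-x)) (fun x => -ψ' (-x)) (fun x => q (-x)) (fun x => -q' (-x)) x =
      -wronskian ψ ψ' q q' (-x) := by
  simp only [wronskian]
  ring

-- the jumps of `ψ'` and `q'` cancel in the Wronskian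
theorem exists_tendsto_wronskian_nhdsNE (hψc : Continuous ψ) (hqc : Continuous q)
    (hψj : HasDeltaJumps ε S ψ ψ') (hqj : HasDeltaJumps ε S q q') {x : ℝ} (hx : x ∈ S) :
    ∃ w, Tendsto (wronskian ψ ψ' q q') (𝓝[≠] x) (𝓝 w) := by
  obtain ⟨aψ, bψ, haψ, hbψ, hjψ⟩ := hψj x hx
  obtain ⟨aq, bq, haq, hbq, hjq⟩ := hqj x hx
  refine ⟨ψ x * bq - bψ * q x, ?_⟩
  rw [← nhdsLT_sup_nhdsGT, tendsto_sup]
  have hcont : ∀ f : ℝ → ℝ, Continuous f → ∀ l ≤ 𝓝 x, Tendsto f l (𝓝 (f x)) :=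
    fun f hf l hl => hf.continuousAt.mono_left hl
  refine ⟨(hcont ψ hψc _ nhdsWithin_le_nhds).mul hbq |>.sub <|
      hbψ.mul (hcont q hqc _ nhdsWithin_le_nhds), ?_⟩
  have hjump : ψ x * bq - bψ * q x = ψ x * aq - aψ * q x := by
    linear_combination q x * hjψ - ψ x * hjq
  rw [hjump]
  exact (hcont ψ hψc _ nhdsWithin_le_nhds).mul haq |>.sub <|
    haψ.mul (hcont q hqc _ nhdsWithin_le_nhds)

end Wronskian

section Comparison

variable {V : ℝ → ℝ} {S : Set ℝ} {lam μ ε : ℝ} {ψ ψ' q q' : ℝ → ℝ}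

theorem exists_wronskian_nonpos_right (hS : S.Finite) (hμ : 0 < μ)
    (hV : Tendsto V atTop (𝓝 (lam ^ 2)))
    (hψ : IsSchrodingerSolutionOff V S ψ ψ') (hψc : Continuous ψ) (hψ0 : ∀ x, 0 < ψ x)
    (hψlim : Tendsto ψ atTop (𝓝 0)) (hψl : ∀ x ∈ S, ∃ b, Tendsto ψ' (𝓝[<] x) (𝓝 b))
    (hq : IsSchrodingerSolutionOff (fun x => V x + μ) S q q') (hqc : Continuous q)
    (hqlim : Tendsto q atTop (𝓝 0)) (hql : ∀ x ∈ S, ∃ b, Tendsto q' (𝓝[<] x) (𝓝 b))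
    {x₀ : ℝ} (hx₀ : 0 < q x₀) :
    ∃ v, x₀ < v ∧ (∀ x ∈ Ico x₀ v, 0 < q x) ∧
      ∃ c ≤ 0, Tendsto (wronskian ψ ψ' q q') (𝓝[<] v) (𝓝 c) := by
  by_cases hz : ∃ z ∈ Ici x₀, q z = 0
  · obtain ⟨v, hx₀v, hqv, hpos⟩ := exists_first_zero hqc hx₀ hz
    obtain ⟨bψ, hbψ⟩ := hψ.exists_tendsto_nhdsLT hψl v
    obtain ⟨bq, hbq⟩ := hq.exists_tendsto_nhdsLT hql v
    have hbq0 : bq ≤ 0 := by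
      refine nonpos_of_tendsto_deriv_nhdsLT hqc.continuousWithinAt hqv ?_ hbq
      filter_upwards [(hS.eventually_notMem_nhdsNE v).filter_mono (nhdsLT_le_nhdsNE v),
        Ioo_mem_nhdsLT hx₀v] with x hxS hx
      exact ⟨(hq x hxS).1, hpos x (Ioo_subset_Ico_self hx)⟩
    refine ⟨v, hx₀v, hpos, ψ v * bq, mul_nonpos_of_nonneg_of_nonpos (hψ0 v).le hbq0, ?_⟩
    have hW := (hψc.continuousWithinAt.tendsto.mul hbq).sub
      (hbψ.mul hqc.continuousWithinAt.tendsto)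
    rw [hqv, mul_zero, sub_zero] at hW
    exact hW
  · push Not at hz
    have hpos : ∀ x ∈ Ici x₀, 0 < q x := fun x hx =>
      pos_of_forall_mem_Icc_ne_zero hqc.continuousOn hx₀ hx fun z hz' => hz z hz'.1
    -- far out, `q` decays at least like `e^{-k x}` and `ψ` at most like `e^{-k' x}`, with `k' < k`
    set k := √(lam ^ 2 + μ / 2)
    set k' := √(lam ^ 2 + μ / 4)
    have hkk : k' < k := Real.sqrt_lt_sqrt (by positivity) (by linarith)
    obtain ⟨R, hR⟩ := eventually_atTop.1 <| (eventually_gt_atTop x₀).and <|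
      (hS.eventually_cofinite_notMem.filter_mono atTop_le_cofinite).and <|
      (hV.eventually_const_lt (by linarith : lam ^ 2 - μ / 2 < lam ^ 2)).and
      (hV.eventually_lt_const (by linarith : lam ^ 2 < lam ^ 2 + μ / 4))
    have hRx₀ : x₀ ≤ R := (hR R le_rfl).1.le
    have hq_slope : q' R + k * q R ≤ 0 := by
      refine deriv_add_mul_nonpos_of_tendsto_zero (Real.sqrt_nonneg _)
        (fun x hx => (hq x (hR x hx).2.1).1) (fun x hx => (hq x (hR x hx).2.1).2)
        (fun x hx => ?_) hqlim
      rw [Real.sq_sqrt (by positivity)]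
      nlinarith [(hR x hx).2.2.1, hpos x (hRx₀.trans hx)]
    have hψ_slope : -ψ' R + k' * -ψ R ≤ 0 := by
      refine deriv_add_mul_nonpos_of_tendsto_zero (f := fun x => -ψ x)
        (f'' := fun x => -(V x * ψ x)) (Real.sqrt_nonneg _)
        (fun x hx => (hψ x (hR x hx).2.1).1.neg) (fun x hx => (hψ x (hR x hx).2.1).2.neg)
        (fun x hx => ?_) (by simpa using hψlim.neg)
      rw [Real.sq_sqrt (by positivity)]
      nlinarith [(hR x hx).2.2.2, hψ0 x]
    refine ⟨R, (hR R le_rfl).1, fun x hx => hpos x hx.1, wronskian ψ ψ' q q' R, ?_,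
      (hasDerivAt_wronskian hψ hq (hR R le_rfl).2.1).continuousAt.continuousWithinAt⟩
    have hψq := mul_pos (hψ0 R) (hpos R hRx₀)
    have h1 := mul_le_mul_of_nonneg_left hq_slope (hψ0 R).le
    have h2 := mul_le_mul_of_nonneg_left hψ_slope (hpos R hRx₀).le
    simp only [wronskian]
    nlinarith

theorem exists_wronskian_nonneg_left (hS : S.Finite) (hμ : 0 < μ)
    (hV : Tendsto V atBot (𝓝 (lam ^ 2)))
    (hψ : IsSchrodingerSolutionOff V S ψ ψ') (hψc : Continuous ψ) (hψ0 : ∀ x, 0 < ψ x)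
    (hψlim : Tendsto ψ atBot (𝓝 0)) (hψr : ∀ x ∈ S, ∃ a, Tendsto ψ' (𝓝[>] x) (𝓝 a))
    (hq : IsSchrodingerSolutionOff (fun x => V x + μ) S q q') (hqc : Continuous q)
    (hqlim : Tendsto q atBot (𝓝 0)) (hqr : ∀ x ∈ S, ∃ a, Tendsto q' (𝓝[>] x) (𝓝 a))
    {x₀ : ℝ} (hx₀ : 0 < q x₀) :
    ∃ u < x₀, (∀ x ∈ Ioc u x₀, 0 < q x) ∧
      ∃ c ≥ 0, Tendsto (wronskian ψ ψ' q q') (𝓝[>] u) (𝓝 c) := by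
  have hreflect : ∀ {f : ℝ → ℝ}, (∀ x ∈ S, ∃ a, Tendsto f (𝓝[>] x) (𝓝 a)) →
      ∀ x ∈ -S, ∃ b, Tendsto (fun y => -f (-y)) (𝓝[<] x) (𝓝 b) := fun hf x hx =>
    let ⟨a, ha⟩ := hf (-x) hx; ⟨-a, (ha.comp tendsto_neg_nhdsLT).neg⟩
  obtain ⟨v, hv, hpos, c, hc, hW⟩ := exists_wronskian_nonpos_right hS.neg hμ
    (hV.comp tendsto_neg_atTop_atBot) hψ.comp_neg (hψc.comp continuous_neg) (fun x => hψ0 _)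
    (hψlim.comp tendsto_neg_atTop_atBot) (hreflect hψr) hq.comp_neg (hqc.comp continuous_neg)
    (hqlim.comp tendsto_neg_atTop_atBot) (hreflect hqr) (x₀ := -x₀) (by simpa using hx₀)
  refine ⟨-v, by linarith, fun x hx => by simpa using hpos (-x) ⟨by linarith [hx.2],
    by linarith [hx.1]⟩, -c, by linarith, ?_⟩
  simpa [Function.comp_def, wronskian_comp_neg] using (hW.comp tendsto_neg_nhdsGT_neg).neg

theorem nonpos_of_positive_ground_state (hS : S.Finite) (hμ : 0 < μ)
    (hVtop : Tendsto V atTop (𝓝 (lam ^ 2))) (hVbot : Tendsto V atBot (𝓝 (lam ^ 2)))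
    (hψ : IsSchrodingerSolutionOff V S ψ ψ') (hψc : Continuous ψ) (hψ0 : ∀ x, 0 < ψ x)
    (hψtop : Tendsto ψ atTop (𝓝 0)) (hψbot : Tendsto ψ atBot (𝓝 0))
    (hψj : HasDeltaJumps ε S ψ ψ')
    (hq : IsSchrodingerSolutionOff (fun x => V x + μ) S q q') (hqc : Continuous q)
    (hqtop : Tendsto q atTop (𝓝 0)) (hqbot : Tendsto q atBot (𝓝 0))
    (hqj : HasDeltaJumps ε S q q') (x₀ : ℝ) : q x₀ ≤ 0 := by
  by_contra! hx₀
  obtain ⟨v, hx₀v, hqv, c, hc, hWv⟩ := exists_wronskian_nonpos_right hS hμ hVtop hψ hψc hψ0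
    hψtop hψj.exists_tendsto_nhdsLT hq hqc hqtop hqj.exists_tendsto_nhdsLT hx₀
  obtain ⟨u, hux₀, hqu, c', hc', hWu⟩ := exists_wronskian_nonneg_left hS hμ hVbot hψ hψc hψ0
    hψbot hψj.exists_tendsto_nhdsGT hq hqc hqbot hqj.exists_tendsto_nhdsGT hx₀
  obtain ⟨G, hGc, hGW⟩ := exists_continuous_eqOn_compl_of_tendsto_nhdsNE hS
    (fun x hx => (hasDerivAt_wronskian hψ hq hx).continuousAt)
    fun x hx => exists_tendsto_wronskian_nhdsNE hψc hqc hψj hqj hx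
  have hWG : ∀ x, wronskian ψ ψ' q q' =ᶠ[𝓝[≠] x] G := fun x =>
    (hS.eventually_notMem_nhdsNE x).mono fun y hy => (hGW hy).symm
  have hGv : G v = c := tendsto_nhds_unique (hGc.continuousAt.mono_left nhdsWithin_le_nhds)
    (hWv.congr' ((hWG v).filter_mono (nhdsLT_le_nhdsNE v)))
  have hGu : G u = c' := tendsto_nhds_unique (hGc.continuousAt.mono_left nhdsWithin_le_nhds)
    (hWu.congr' ((hWG u).filter_mono (nhdsGT_le_nhdsNE u)))
  -- `G' = μ ψ q > 0` on `(u, v)` off `S`, so `G` increases from `c' ≥ 0` to `c ≤ 0`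
  have hGuv : G u < G v := by
    refine lt_of_hasDerivAt_pos_off_finite hS (hux₀.trans hx₀v) hGc.continuousOn
      fun x ⟨hx, hxS⟩ => ⟨(hasDerivAt_wronskian hψ hq hxS).congr_of_eventuallyEq
        (eventuallyEq_of_mem (hS.isClosed.isOpen_compl.mem_nhds hxS) hGW), ?_⟩
    rcases le_or_gt x₀ x with hx₀x | hxx₀
    · exact mul_pos hμ (mul_pos (hψ0 x) (hqv x ⟨hx₀x, hx.2⟩))
    · exact mul_pos hμ (mul_pos (hψ0 x) (hqu x ⟨hx.1, hxx₀.le⟩))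
  linarith

theorem eq_zero_of_positive_ground_state (hS : S.Finite) (hμ : 0 < μ)
    (hVtop : Tendsto V atTop (𝓝 (lam ^ 2))) (hVbot : Tendsto V atBot (𝓝 (lam ^ 2)))
    (hψ : IsSchrodingerSolutionOff V S ψ ψ') (hψc : Continuous ψ) (hψ0 : ∀ x, 0 < ψ x)
    (hψtop : Tendsto ψ atTop (𝓝 0)) (hψbot : Tendsto ψ atBot (𝓝 0))
    (hψj : HasDeltaJumps ε S ψ ψ')
    (hq : IsSchrodingerSolutionOff (fun x => V x + μ) S q q') (hqc : Continuous q)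
    (hqtop : Tendsto q atTop (𝓝 0)) (hqbot : Tendsto q atBot (𝓝 0))
    (hqj : HasDeltaJumps ε S q q') : q = 0 := by
  funext x
  refine le_antisymm (nonpos_of_positive_ground_state hS hμ hVtop hVbot hψ hψc hψ0 hψtop hψbot
    hψj hq hqc hqtop hqbot hqj x) (neg_nonpos.1 ?_)
  exact nonpos_of_positive_ground_state hS hμ hVtop hVbot hψ hψc hψ0 hψtop hψbot hψj hq.neg
    hqc.neg (by rw [← neg_zero]; exact hqtop.neg) (by rw [← neg_zero]; exact hqbot.neg) hqj.neg x

end Comparison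

theorem LMinus_no_positive_eigenvalue_general (ε L lam : ℝ)
    (ψ ψ' : ℝ → ℝ)
    (hψ : IsStandingWaveProfile ε L lam ψ ψ')
    (hpos : ∀ x : ℝ, 0 < ψ x) :
    ¬∃ μ : ℝ, 0 < μ ∧
      ∃ q q' : ℝ → ℝ, q ≠ 0 ∧ Continuous q ∧
        Tendsto q atTop (𝓝 0) ∧ Tendsto q atBot (𝓝 0) ∧
        (∀ x : ℝ, x ≠ L → x ≠ -L →
          HasDerivAt q (q' x) x ∧
          HasDerivAt q' (μ * q x + lam ^ 2 * q x - 2 * ψ x ^ 2 * q x) x) ∧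
        (∀ x : ℝ, x = L ∨ x = -L →
          ∃ a b : ℝ,
            Tendsto q' (𝓝[>] x) (𝓝 a) ∧
            Tendsto q' (𝓝[<] x) (𝓝 b) ∧
            a - b = -ε * q x) := by
  rintro ⟨μ, hμ, q, q', hq0, hqc, hqtop, hqbot, hqd, hqj⟩
  obtain ⟨hψc, hψtop, hψbot, hψd, hψj⟩ := hψ
  have hV : ∀ l : Filter ℝ, Tendsto ψ l (𝓝 0) →
      Tendsto (fun x => lam ^ 2 - 2 * ψ x ^ 2) l (𝓝 (lam ^ 2)) := fun l h => by
    simpa using ((h.pow 2).const_mul 2).const_sub (lam ^ 2)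
  have hoff : ∀ {x : ℝ}, x ∉ ({L, -L} : Set ℝ) → x ≠ L ∧ x ≠ -L := by
    simp [not_or]
  refine hq0 (eq_zero_of_positive_ground_state (toFinite {L, -L}) hμ (hV _ hψtop) (hV _ hψbot)
    (fun x hx => ?_) hψc hpos hψtop hψbot hψj (fun x hx => ?_) hqc hqtop hqbot hqj)
  · obtain ⟨h₁, h₂⟩ := hψd x (hoff hx).1 (hoff hx).2
    exact ⟨h₁, h₂.congr_deriv (by ring)⟩
  · obtain ⟨h₁, h₂⟩ := hqd x (hoff hx).1 (hoff hx).2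
    exact ⟨h₁, h₂.congr_deriv (by ring)⟩

/-- for a strictly positive standing-wave profile `ψ`, the operator
`L₋ = d²/dx² + 2ψ² + εv - lam²` has no positive eigenvalue. -/
theorem LMinus_no_positive_eigenvalue (ε L lam : ℝ)
    (hε : 0 < ε) (hL : 0 < L) (hlam : 0 < lam)
    (ψ ψ' : ℝ → ℝ)
    (hψ : IsStandingWaveProfile ε L lam ψ ψ')
    (hpos : ∀ x : ℝ, 0 < ψ x) :
    ¬∃ μ : ℝ, 0 < μ ∧
      ∃ q q' : ℝ → ℝ, q ≠ 0 ∧ Continuous q ∧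
        Tendsto q atTop (𝓝 0) ∧ Tendsto q atBot (𝓝 0) ∧
        (∀ x : ℝ, x ≠ L → x ≠ -L →
          HasDerivAt q (q' x) x ∧
          HasDerivAt q' (μ * q x + lam ^ 2 * q x - 2 * ψ x ^ 2 * q x) x) ∧
        (∀ x : ℝ, x = L ∨ x = -L →
          ∃ a b : ℝ,
            Tendsto q' (𝓝[>] x) (𝓝 a) ∧
            Tendsto q' (𝓝[<] x) (𝓝 b) ∧
            a - b = -ε * q x) :=
  LMinus_no_positive_eigenvalue_general ε L lam ψ ψ' hψ hpos
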